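/- arXiv:1509.08251 — 3 statements merged into one kernel-verified Lean document; each statement's English description precedes it below -/
import Mathlib

section
/- Let G=(V,E) be a finite simple undirected graph. For every partition π of V there exists a unique coarsest stable partition refining π; that is, there is a stable partition ρ with π ⪯ ρ such that every stable partition σ with π ⪯ σ satisfies ρ ⪯ σ. -/
/-!
One round of colour refinement splits every cell of `π` according to the number of neighbours
in each cell of `π`. A stable `σ` refining `π` has equal counts into every union of its own
cells, in particular into every cell of `π`, so it also refines the refined partition. Hence
the stable partitions refining `π` and those refining its refinement are the same. Iterating
the refinement strictly refines until the partition is stable, which happens since there are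
finitely many partitions; the stable partition reached is the greatest stable refinement of
`π`, and a greatest element is unique.
-/

/-- The number of neighbours of `u` in the cell of `w` of the partition `π`. -/
noncomputable def cellDeg {V : Type*} (G : SimpleGraph V) (π : Setoid V) (u w : V) : ℕ :=
  (G.neighborSet u ∩ {x | π.r x w}).ncard

/-- The partition (given as a setoid) `π` is stable for the graph `G`:
any two vertices in a common cell have the same number of neighbours in every cell. -/
def IsStable {V : Type*} (G : SimpleGraph V) (π : Setoid V) : Prop :=
  ∀ u v, π.r u v → ∀ w, cellDeg G π u w = cellDeg G π v w

/-- `S` is `π`-closed, i.e. a union of cells of `π`. -/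
def Closed {V : Type*} (π : Setoid V) (S : Set V) : Prop :=
  ∀ u v, π.r u v → (u ∈ S ↔ v ∈ S)

/-- `ρ` refines `π`; this is the paper's `π ⪯ ρ`. -/
def Finer {V : Type*} (ρ π : Setoid V) : Prop :=
  ∀ u v, ρ.r u v → π.r u v

/-- `C` is a cell of the partition `π`. -/
def IsCell {V : Type*} (π : Setoid V) (C : Set V) : Prop :=
  ∃ w, C = {x | π.r x w}

/-- `π'` is obtained from `π` by the refining operation `(R, S)` (for `π`-closed `R`, `S`):
cells disjoint from `S` are unchanged, and two vertices of `S` stay in a common cell iff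
they were `π`-equivalent and have the same number of neighbours in every cell of `π`
contained in `R` (such cells are exactly the cells of the elements of `R`). -/
def IsRefineOp {V : Type*} (G : SimpleGraph V) (π : Setoid V) (R S : Set V)
    (π' : Setoid V) : Prop :=
  Closed π R ∧ Closed π S ∧
    ∀ u v, π'.r u v ↔
      (π.r u v ∧ (u ∈ S → ∀ w ∈ R, cellDeg G π u w = cellDeg G π v w))


def refineStep {V : Type*} (G : SimpleGraph V) (π : Setoid V) : Setoid V where
  r u v := π.r u v ∧ ∀ w, cellDeg G π u w = cellDeg G π v w
  iseqv := ⟨fun u => ⟨π.refl u, fun _ => rfl⟩,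
    fun h => ⟨π.symm h.1, fun w => (h.2 w).symm⟩,
    fun h h' => ⟨π.trans h.1 h'.1, fun w => (h.2 w).trans (h'.2 w)⟩⟩

section

variable {V : Type*} (G : SimpleGraph V)

theorem finer_iff_le {ρ π : Setoid V} : Finer ρ π ↔ ρ ≤ π :=
  Iff.rfl

theorem refineStep_le (π : Setoid V) : refineStep G π ≤ π :=
  fun _ _ h => h.1

theorem refineStep_eq_self_iff {π : Setoid V} : refineStep G π = π ↔ IsStable G π := by
  refine ⟨fun h u v huv => ?_, fun h => le_antisymm (refineStep_le G π) ?_⟩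
  · rw [← h] at huv
    exact huv.2
  · exact fun u v huv => ⟨huv, h u v huv⟩

theorem IsStable.ncard_neighborSet_inter_eq [Finite V] {σ : Setoid V} (hσ : IsStable G σ)
    {u v : V} (huv : σ.r u v) {S : Set V} (hS : Closed σ S) :
    (G.neighborSet u ∩ S).ncard = (G.neighborSet v ∩ S).ncard := by
  induction S using WellFoundedLT.induction with
  | _ S ih =>
    rcases S.eq_empty_or_nonempty with rfl | ⟨w, hw⟩
    · simp
    set C : Set V := {x | σ.r x w}
    have hCS : C ⊆ S := fun x hx => (hS x w hx).2 hw
    have hrest : Closed σ (S \ C) := fun x y hxy =>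
      and_congr (hS x y hxy) (not_congr ⟨fun h => σ.trans (σ.symm hxy) h, σ.trans hxy⟩)
    have hsplit : ∀ a, (G.neighborSet a ∩ S).ncard
        = cellDeg G σ a w + (G.neighborSet a ∩ (S \ C)).ncard := fun a => by
      rw [cellDeg, ← Set.ncard_union_eq (by tauto_set), ← Set.inter_union_distrib_left,
        Set.union_sdiff_cancel hCS]
    rw [hsplit, hsplit, hσ u v huv w,
      ih (S \ C) (Set.sdiff_ssubset_left_iff.2 ⟨w, hw, σ.refl w⟩) hrest]

theorem IsStable.le_refineStep [Finite V] {σ π : Setoid V} (hσ : IsStable G σ) (hle : σ ≤ π) :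
    σ ≤ refineStep G π := fun _ _ huv =>
  ⟨hle huv, fun _ => hσ.ncard_neighborSet_inter_eq G huv fun _ _ hxy =>
    ⟨fun h => π.trans (π.symm (hle hxy)) h, fun h => π.trans (hle hxy) h⟩⟩

theorem exists_isGreatest_stable_le [Finite V] (π : Setoid V) :
    ∃ ρ, IsGreatest {σ | IsStable G σ ∧ σ ≤ π} ρ := by
  have : Finite (Setoid V) :=
    Finite.of_injective (fun σ : Setoid V => ⇑σ) fun _ _ => Setoid.eq_iff_rel_eq.2
  induction π using WellFoundedLT.induction with
  | _ π ih =>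
    by_cases hπ : IsStable G π
    · exact ⟨π, ⟨hπ, le_rfl⟩, fun σ hσ => hσ.2⟩
    have hlt : refineStep G π < π :=
      (refineStep_le G π).lt_of_ne (mt (refineStep_eq_self_iff G).1 hπ)
    have hsame : {σ | IsStable G σ ∧ σ ≤ refineStep G π} = {σ | IsStable G σ ∧ σ ≤ π} :=
      Set.ext fun σ => ⟨fun h => ⟨h.1, h.2.trans hlt.le⟩, fun h => ⟨h.1, h.1.le_refineStep G h.2⟩⟩
    simpa only [hsame] using ih _ hlt

end

/-- For every partition `π` of the vertex set of a finite graph there is a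
unique coarsest stable partition refining it: a stable partition `ρ` refining `π` that is
refined by every stable partition refining `π`. -/
theorem coarsest_stable_unique {V : Type*} [Finite V] (G : SimpleGraph V) (π : Setoid V) :
    ∃! ρ : Setoid V, IsStable G ρ ∧ Finer ρ π ∧
      ∀ σ : Setoid V, IsStable G σ → Finer σ π → Finer σ ρ := by
  obtain ⟨ρ, hρ⟩ := exists_isGreatest_stable_le G π
  have hiff : ∀ ρ : Setoid V, (IsStable G ρ ∧ Finer ρ π ∧
      ∀ σ : Setoid V, IsStable G σ → Finer σ π → Finer σ ρ) ↔
        IsGreatest {σ | IsStable G σ ∧ σ ≤ π} ρ := fun ρ => by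
    simp only [finer_iff_le, IsGreatest, upperBounds, Set.mem_ofPred_eq, and_imp, and_assoc]
  simp only [hiff]
  exact ⟨ρ, hρ, fun ρ' hρ' => hρ'.unique hρ⟩
end

section
/- Let G=(V,E) be a finite simple undirected graph and let π be an unstable partition of V. Then cost(π) = min over all effective elementary refining operations (R,S) applicable to π of cost(R,S) + cost(π(R,S)); that is, restricting the minimum in the definition of cost to elementary operations does not change its value. -/
/-- The cost of the refining operation `(R,S)`: the number of pairs `(u,v)` with
`uv ∈ E(G)`, `u ∈ R`, `v ∈ S`. -/
noncomputable def opCost {V : Type*} (G : SimpleGraph V) (R S : Set V) : ℕ :=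
  {p : V × V | G.Adj p.1 p.2 ∧ p.1 ∈ R ∧ p.2 ∈ S}.ncard

/-- `CostReach G π c` holds iff some sequence of effective refining operations starting
from `π` and ending in a stable partition has total cost `c`. -/
inductive CostReach {V : Type*} (G : SimpleGraph V) : Setoid V → ℕ → Prop
  | stable {π : Setoid V} (h : IsStable G π) : CostReach G π 0
  | step {π π' : Setoid V} {R S : Set V} {c : ℕ} (hop : IsRefineOp G π R S π')
      (heff : π' ≠ π) (htail : CostReach G π' c) :
      CostReach G π (opCost G R S + c)

/-- The cost of a partition: the minimum total cost of a sequence of effective refining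
operations transforming it into a stable partition. -/
noncomputable def cost {V : Type*} (G : SimpleGraph V) (π : Setoid V) : ℕ :=
  sInf {c : ℕ | CostReach G π c}

/-!
Take an optimal sequence of refining operations from `π`. Its first operation `(R, S)` is
effective, so it separates some `π`-equivalent `p ∈ S` and `q` that differ in their degree into a
cell `R₀ ⊆ R`; let `S₀` be the cell of `p`. The elementary operation `(R₀, S₀)` is then effective,
and following it by `(R₀, S \ S₀)` and `(R \ R₀, S)` costs `cost(R, S)` in total and yields a
partition finer than `π(R, S)` but coarser than every stable partition finer than `π`. Applying
the remaining operations of the sequence to such a partition shows that it costs at most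
`cost(π(R, S))`, whence `cost(R₀, S₀) + cost(π(R₀, S₀)) ≤ cost(π)`. The reverse inequality is
immediate from the definition of `cost`.
-/

section

variable {V : Type*}

section Partitions

variable {π ρ σ : Setoid V} {R S : Set V}

lemma closed_cell (π : Setoid V) (a : V) : Closed π {x | π.r x a} :=
  fun _ _ h => ⟨π.trans (π.symm h), π.trans h⟩

lemma Closed.mono (h : Closed π S) (hρ : Finer ρ π) : Closed ρ S :=
  fun u v huv => h u v (hρ u v huv)

lemma Closed.diff (hR : Closed π R) (hS : Closed π S) : Closed π (R \ S) :=
  fun u v h => by simp only [Set.mem_sdiff, hR u v h, hS u v h]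

lemma Closed.cell_subset (h : Closed π S) {a : V} (ha : a ∈ S) : {x | π.r x a} ⊆ S :=
  fun x hx => (h x a hx).mpr ha

lemma Finer.trans (h₁ : Finer ρ σ) (h₂ : Finer σ π) : Finer ρ π :=
  fun u v h => h₂ u v (h₁ u v h)

lemma Finer.antisymm (h₁ : Finer ρ π) (h₂ : Finer π ρ) : ρ = π :=
  Setoid.ext fun u v => ⟨h₁ u v, h₂ u v⟩

end Partitions

section Refinement

variable (G : SimpleGraph V) {π ρ σ : Setoid V} {R S : Set V}

/-- The partition `π(R, S)`; closedness of `S` makes the relation symmetric and transitive. -/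
def refineOp (π : Setoid V) (R S : Set V) (hS : Closed π S) : Setoid V where
  r u v := π.r u v ∧ (u ∈ S → ∀ w ∈ R, cellDeg G π u w = cellDeg G π v w)
  iseqv := by
    refine ⟨fun u => ⟨π.refl u, fun _ _ _ => rfl⟩, ?_, ?_⟩
    · rintro u v ⟨huv, h⟩
      exact ⟨π.symm huv, fun hv w hw => (h ((hS u v huv).mpr hv) w hw).symm⟩
    · rintro u v x ⟨huv, h₁⟩ ⟨hvx, h₂⟩
      exact ⟨π.trans huv hvx, fun hu w hw => (h₁ hu w hw).trans (h₂ ((hS u v huv).mp hu) w hw)⟩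

lemma isRefineOp_refineOp (hR : Closed π R) (hS : Closed π S) :
    IsRefineOp G π R S (refineOp G π R S hS) :=
  ⟨hR, hS, fun _ _ => Iff.rfl⟩

variable {G}

lemma IsRefineOp.finer (hop : IsRefineOp G π R S σ) : Finer σ π :=
  fun u v h => ((hop.2.2 u v).mp h).1

lemma IsRefineOp.exists_split (hop : IsRefineOp G π R S σ) (hne : σ ≠ π) :
    ∃ p q, p ∈ S ∧ π.r p q ∧ ∃ w ∈ R, cellDeg G π p w ≠ cellDeg G π q w := by
  by_contra! h
  exact hne (hop.finer.antisymm fun p q hpq => (hop.2.2 p q).mpr ⟨hpq, fun hp => h p q hp hpq⟩)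

lemma refineOp_cell_ne {p q w : V} (hpq : π.r p q) (hdeg : cellDeg G π p w ≠ cellDeg G π q w) :
    refineOp G π {x | π.r x w} {x | π.r x p} (closed_cell π p) ≠ π := by
  intro h
  have hpq' : (refineOp G π {x | π.r x w} {x | π.r x p} (closed_cell π p)).r p q := by
    rw [h]; exact hpq
  exact hdeg (hpq'.2 (π.refl p) w (π.refl w))

end Refinement

section Degrees

lemma Set.ncard_eq_sum_ncard_inter_preimage {α β : Type*} [Finite α] [Fintype β]
    (s : Set α) (f : α → β) : s.ncard = ∑ b, (s ∩ f ⁻¹' {b}).ncard := by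
  classical
  have := Fintype.ofFinite α
  simp_rw [Set.ncard_eq_toFinset_card']
  rw [Finset.card_eq_sum_card_fiberwise (f := f) (t := Finset.univ) (by simp)]
  congr 1
  ext b
  congr 1
  ext x
  simp

open Classical in
lemma cell_inter_cell_of_finer {ρ π : Setoid V} (hρ : Finer ρ π) (w x : V) :
    {y | π.r y w} ∩ {y | ρ.r y x} = if π.r x w then {y | ρ.r y x} else ∅ := by
  ext y
  split_ifs with hx
  · exact ⟨And.right, fun hy => ⟨π.trans (hρ y x hy) hx, hy⟩⟩
  · exact ⟨fun hy => hx (π.trans (π.symm (hρ y x hy.2)) hy.1), False.elim⟩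

variable [Finite V] (G : SimpleGraph V) {π ρ σ τ : Setoid V} {R S : Set V}

/-- Degrees into a cell of `π` are sums of degrees into the cells of a finer `ρ` it contains. -/
lemma cellDeg_eq_of_finer (hρ : Finer ρ π) {u v w : V}
    (h : ∀ x, π.r x w → cellDeg G ρ u x = cellDeg G ρ v x) :
    cellDeg G π u w = cellDeg G π v w := by
  classical
  have := Fintype.ofFinite (Quotient ρ)
  rw [cellDeg, cellDeg, Set.ncard_eq_sum_ncard_inter_preimage _ (Quotient.mk ρ),
    Set.ncard_eq_sum_ncard_inter_preimage _ (Quotient.mk ρ)]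
  refine Finset.sum_congr rfl fun q _ => ?_
  induction q using Quotient.inductionOn with
  | h x =>
    have hfib : Quotient.mk ρ ⁻¹' {Quotient.mk ρ x} = {y | ρ.r y x} := Set.ext fun _ => Quotient.eq
    simp only [hfib, Set.inter_assoc, cell_inter_cell_of_finer hρ]
    split_ifs with hx
    · exact h x hx
    · simp

lemma IsStable.finer_of_isRefineOp (hτ : IsStable G τ) (hτπ : Finer τ π)
    (hop : IsRefineOp G π R S σ) : Finer τ σ := fun u v huv =>
  (hop.2.2 u v).mpr ⟨hτπ u v huv, fun _ _ _ =>
    cellDeg_eq_of_finer G hτπ fun x _ => hτ u v huv x⟩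

lemma IsRefineOp.mono {ρ' : Setoid V} (hρπ : Finer ρ π) (hop : IsRefineOp G π R S σ)
    (hop' : IsRefineOp G ρ R S ρ') : Finer ρ' σ := by
  intro u v h
  obtain ⟨huv, hdeg⟩ := (hop'.2.2 u v).mp h
  exact (hop.2.2 u v).mpr ⟨hρπ u v huv, fun hu w hw =>
    cellDeg_eq_of_finer G hρπ fun x hx => hdeg hu x ((hop.1 x w hx).mpr hw)⟩

end Degrees

section Cost

variable {G : SimpleGraph V} {π ρ σ : Setoid V} {R S : Set V} {c : ℕ}

/-- An ineffective operation may be dropped from a sequence without increasing its cost. -/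
lemma CostReach.of_isRefineOp (hop : IsRefineOp G π R S σ) (h : CostReach G σ c) :
    ∃ e ≤ opCost G R S + c, CostReach G π e := by
  by_cases hne : σ = π
  · exact ⟨c, Nat.le_add_left _ _, hne ▸ h⟩
  · exact ⟨_, le_rfl, .step hop hne h⟩

variable [Finite V]

lemma opCost_add_opCost_diff_right {S₀ : Set V} (h : S₀ ⊆ S) :
    opCost G R S₀ + opCost G R (S \ S₀) = opCost G R S := by
  unfold opCost
  convert Set.ncard_inter_add_ncard_sdiff_eq_ncard
    {p : V × V | G.Adj p.1 p.2 ∧ p.1 ∈ R ∧ p.2 ∈ S} {p | p.2 ∈ S₀} using 3 <;>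
    ext ⟨x, y⟩ <;> simp only [Set.mem_ofPred_eq, Set.mem_inter_iff, Set.mem_sdiff] <;> grind

lemma opCost_add_opCost_diff_left {R₀ : Set V} (h : R₀ ⊆ R) :
    opCost G R₀ S + opCost G (R \ R₀) S = opCost G R S := by
  unfold opCost
  convert Set.ncard_inter_add_ncard_sdiff_eq_ncard
    {p : V × V | G.Adj p.1 p.2 ∧ p.1 ∈ R ∧ p.2 ∈ S} {p | p.1 ∈ R₀} using 3 <;>
    ext ⟨x, y⟩ <;> simp only [Set.mem_ofPred_eq, Set.mem_inter_iff, Set.mem_sdiff] <;> grind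

/-- Running the same operations on `ρ` keeps it between its stable refinements and the current
partition, so it reaches stability at no greater cost. -/
lemma CostReach.exists_le_of_finer (h : CostReach G π c) (hρπ : Finer ρ π)
    (hstab : ∀ μ, IsStable G μ → Finer μ π → Finer μ ρ) : ∃ d ≤ c, CostReach G ρ d := by
  induction h generalizing ρ with
  | stable hπ => exact ⟨0, le_rfl, hρπ.antisymm (hstab _ hπ fun _ _ => id) ▸ .stable hπ⟩
  | @step π σ R S c hop _ _ ih =>
    have hS : Closed ρ S := hop.2.1.mono hρπ
    have hop' := isRefineOp_refineOp G (hop.1.mono hρπ) hS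
    obtain ⟨d, hdc, hd⟩ := ih (hop.mono G hρπ hop') fun μ hμ hμσ =>
      hμ.finer_of_isRefineOp G (hstab μ hμ (hμσ.trans hop.finer)) hop'
    obtain ⟨e, hed, he⟩ := hd.of_isRefineOp hop'
    exact ⟨e, by omega, he⟩

variable (G) in
lemma exists_costReach (π : Setoid V) : ∃ c, CostReach G π c := by
  have : Finite (Setoid V) := Finite.of_injective (⇑) fun _ _ => Setoid.eq_iff_rel_eq.mpr
  induction π using WellFoundedLT.induction with
  | _ π ih =>
    by_cases hπ : IsStable G π
    · exact ⟨0, .stable hπ⟩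
    obtain ⟨u, v, huv, w, hdeg⟩ :
        ∃ u v, π.r u v ∧ ∃ w, cellDeg G π u w ≠ cellDeg G π v w := by
      simpa [IsStable] using hπ
    have hop := isRefineOp_refineOp G (closed_cell π w) (closed_cell π u)
    have hne := refineOp_cell_ne huv hdeg
    obtain ⟨c, hc⟩ := ih _ (lt_of_le_of_ne hop.finer hne)
    exact ⟨_, .step hop hne hc⟩

lemma cost_le_of_isRefineOp (hop : IsRefineOp G π R S σ) (hne : σ ≠ π) :
    cost G π ≤ opCost G R S + cost G σ :=
  Nat.sInf_le (CostReach.step hop hne (Nat.sInf_mem (exists_costReach G σ)))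

lemma IsRefineOp.finer_of_split {R₀ S₀ : Set V} {π₀ π₁ π₂ : Setoid V}
    (hop : IsRefineOp G π R S σ) (h₀ : IsRefineOp G π R₀ S₀ π₀)
    (h₁ : IsRefineOp G π₀ R₀ (S \ S₀) π₁) (h₂ : IsRefineOp G π₁ (R \ R₀) S π₂) :
    Finer π₂ σ := by
  intro u v h
  obtain ⟨h₁uv, hdeg₂⟩ := (h₂.2.2 u v).mp h
  obtain ⟨h₀uv, hdeg₁⟩ := (h₁.2.2 u v).mp h₁uv
  obtain ⟨huv, hdeg₀⟩ := (h₀.2.2 u v).mp h₀uv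
  refine (hop.2.2 u v).mpr ⟨huv, fun hu w hw => ?_⟩
  by_cases hwR₀ : w ∈ R₀
  · by_cases huS₀ : u ∈ S₀
    · exact hdeg₀ huS₀ w hwR₀
    · exact cellDeg_eq_of_finer G h₀.finer fun x hx =>
        hdeg₁ ⟨hu, huS₀⟩ x ((h₀.1 x w hx).mpr hwR₀)
  · exact cellDeg_eq_of_finer G (h₁.finer.trans h₀.finer) fun x hx =>
      hdeg₂ hu x ⟨(hop.1 x w hx).mpr hw, fun hxR₀ => hwR₀ ((h₀.1 x w hx).mp hxR₀)⟩

lemma CostReach.exists_le_of_split {R₀ S₀ : Set V} (hop : IsRefineOp G π R S σ)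
    (h : CostReach G σ c) (hR₀c : Closed π R₀) (hS₀c : Closed π S₀) :
    ∃ e ≤ opCost G R₀ (S \ S₀) + opCost G (R \ R₀) S + c,
      CostReach G (refineOp G π R₀ S₀ hS₀c) e := by
  set π₀ := refineOp G π R₀ S₀ hS₀c
  have h₀ : IsRefineOp G π R₀ S₀ π₀ := isRefineOp_refineOp G hR₀c hS₀c
  have hS₁ : Closed π₀ (S \ S₀) := (hop.2.1.diff hS₀c).mono h₀.finer
  have h₁ := isRefineOp_refineOp G (hR₀c.mono h₀.finer) hS₁
  set π₁ := refineOp G π₀ R₀ (S \ S₀) hS₁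
  have hS₂ : Closed π₁ S := hop.2.1.mono (h₁.finer.trans h₀.finer)
  have h₂ := isRefineOp_refineOp G ((hop.1.diff hR₀c).mono (h₁.finer.trans h₀.finer)) hS₂
  have hstab : ∀ μ, IsStable G μ → Finer μ σ → Finer μ (refineOp G π₁ (R \ R₀) S hS₂) :=
    fun μ hμ hμσ => hμ.finer_of_isRefineOp G (hμ.finer_of_isRefineOp G
      (hμ.finer_of_isRefineOp G (hμσ.trans hop.finer) h₀) h₁) h₂
  obtain ⟨d, hdc, hd⟩ := h.exists_le_of_finer (hop.finer_of_split h₀ h₁ h₂) hstab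
  obtain ⟨e₁, he₁, he₁'⟩ := hd.of_isRefineOp h₂
  obtain ⟨e₀, he₀, he₀'⟩ := he₁'.of_isRefineOp h₁
  exact ⟨e₀, by omega, he₀'⟩

lemma exists_elementary_le_cost (hπ : ¬ IsStable G π) :
    ∃ (R S : Set V) (π' : Setoid V), IsCell π R ∧ IsCell π S ∧ IsRefineOp G π R S π' ∧
      π' ≠ π ∧ opCost G R S + cost G π' ≤ cost G π := by
  have hopt : CostReach G π (cost G π) := Nat.sInf_mem (exists_costReach G π)
  generalize cost G π = m at hopt ⊢
  cases hopt with
  | stable h => exact absurd h hπ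
  | @step _ σ R S c hop hne htail =>
    obtain ⟨p, q, hp, hpq, w, hw, hdeg⟩ := hop.exists_split hne
    have hR₀ := hop.1.cell_subset hw
    obtain ⟨e, he, hreach⟩ :=
      htail.exists_le_of_split hop (closed_cell π w) (closed_cell π p)
    refine ⟨_, _, _, ⟨w, rfl⟩, ⟨p, rfl⟩, isRefineOp_refineOp G (closed_cell π w) (closed_cell π p),
      refineOp_cell_ne hpq hdeg, ?_⟩
    have : cost G _ ≤ e := Nat.sInf_le hreach
    have := opCost_add_opCost_diff_right (G := G) (R := {x | π.r x w}) (hop.2.1.cell_subset hp)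
    have := opCost_add_opCost_diff_left (G := G) (S := S) hR₀
    omega

end Cost

end

/-- For an unstable partition `π`, the cost of `π` equals the minimum,
over all effective *elementary* refining operations `(R,S)` applicable to `π` (i.e. with
`R` and `S` cells of `π`), of `cost(R,S) + cost(π(R,S))`. -/
theorem cost_elementary {V : Type*} [Finite V] (G : SimpleGraph V) (π : Setoid V)
    (hunstable : ¬ IsStable G π) :
    cost G π = sInf {c : ℕ | ∃ (R S : Set V) (π' : Setoid V),
      IsCell π R ∧ IsCell π S ∧ IsRefineOp G π R S π' ∧ π' ≠ π ∧
      c = opCost G R S + cost G π'} := by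
  obtain ⟨R, S, π', hR, hS, hop, hne, hle⟩ := exists_elementary_le_cost hunstable
  apply le_antisymm
  · refine le_csInf ⟨opCost G R S + cost G π', R, S, π', hR, hS, hop, hne, rfl⟩ ?_
    rintro _ ⟨R, S, π', -, -, hop, hne, rfl⟩
    exact cost_le_of_isRefineOp hop hne
  · exact le_trans (Nat.sInf_le ⟨R, S, π', hR, hS, hop, hne, rfl⟩) hle
end

section
/- Let ℓ ≥ 1 and let G be the AND_ℓ-gadget with in-terminals B = {b₀,…,b_{2^ℓ−1}} and out-terminals a₀, a₁. Let π be a stable partition of V(G) such that B is π-closed and the partition induced by π on B is a partition into binary blocks. If a₀ ≈_π a₁, then there exists an in-terminal pair that is not distinguished, i.e. some 0 ≤ p < 2^{ℓ−1} with b_{2p} ≈_π b_{2p+1}. -/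
/-- The vertex type of the gadget `AND_ℓ`.  For `ℓ ∈ {0,1}` it is `Fin 4`
(`a₀ = 0`, `a₁ = 1`, `b₀ = 2`, `b₁ = 3`), for `ℓ = 2` it is `Fin 10`
(`a₀ = 0`, `a₁ = 1`, `b₀,…,b₃ = 2,…,5`, `c₀,…,c₃ = 6,…,9`) and for `ℓ ≥ 3` it is
the disjoint union of a copy of `AND₂` and two copies of `AND_{ℓ-1}`. -/
def ANDVert : ℕ → Type
  | 0 => Fin 4
  | 1 => Fin 4
  | 2 => Fin 10
  | (n + 3) => Fin 10 ⊕ (ANDVert (n + 2) ⊕ ANDVert (n + 2))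

/-- The out-terminal `a₀` of `AND_ℓ`. -/
def ANDa0 : (ℓ : ℕ) → ANDVert ℓ
  | 0 => (0 : Fin 4)
  | 1 => (0 : Fin 4)
  | 2 => (0 : Fin 10)
  | (_ + 3) => Sum.inl (0 : Fin 10)

/-- The out-terminal `a₁` of `AND_ℓ`. -/
def ANDa1 : (ℓ : ℕ) → ANDVert ℓ
  | 0 => (1 : Fin 4)
  | 1 => (1 : Fin 4)
  | 2 => (1 : Fin 10)
  | (_ + 3) => Sum.inl (1 : Fin 10)

/-- The in-terminal `b_i` of `AND_ℓ` (only the values `i < 2^ℓ` are meaningful);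
for `ℓ ≥ 3` the in-terminal sequence is the concatenation of the in-terminal
sequences of the two sub-gadgets. -/
def ANDb : (ℓ : ℕ) → ℕ → ANDVert ℓ
  | 0, _ => (2 : Fin 4)
  | 1, i => if i = 0 then (2 : Fin 4) else (3 : Fin 4)
  | 2, i => (match i with | 0 => 2 | 1 => 3 | 2 => 4 | _ => 5 : Fin 10)
  | (n + 3), i =>
      if i < 2 ^ (n + 2) then Sum.inr (Sum.inl (ANDb (n + 2) i))
      else Sum.inr (Sum.inr (ANDb (n + 2) (i - 2 ^ (n + 2))))

/-- The edges of the gadget `AND₂` (the Cai–Fürer–Immerman gadget):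
`a₀c₀, a₀c₁, a₁c₂, a₁c₃, b₀c₀, b₀c₂, b₁c₁, b₁c₃, b₂c₁, b₂c₂, b₃c₀, b₃c₃`. -/
def AND2rel (u v : Fin 10) : Prop :=
  (u, v) ∈ ([(0, 6), (0, 7), (1, 8), (1, 9), (2, 6), (2, 8), (3, 7), (3, 9),
             (4, 7), (4, 8), (5, 6), (5, 9)] : List (Fin 10 × Fin 10))

/-- The edge relation of the gadget `AND_ℓ`: for `ℓ = 1` the edges `a₀b₀, a₁b₁`; for
`ℓ = 2` the CFI gadget; for `ℓ ≥ 3` the edges inside the three sub-gadgets together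
with the four edges joining the in-terminal pairs `(b₀,b₁)` resp. `(b₂,b₃)` of the top
copy of `AND₂` to the out-terminals of the two copies of `AND_{ℓ-1}`. -/
def ANDrel : (ℓ : ℕ) → ANDVert ℓ → ANDVert ℓ → Prop
  | 0 => fun _ _ => False
  | 1 => fun u v => (u = (0 : Fin 4) ∧ v = (2 : Fin 4)) ∨ (u = (1 : Fin 4) ∧ v = (3 : Fin 4))
  | 2 => AND2rel
  | (n + 3) => fun u v =>
      match u, v with
      | Sum.inl x, Sum.inl y => AND2rel x y
      | Sum.inr (Sum.inl x), Sum.inr (Sum.inl y) => ANDrel (n + 2) x y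
      | Sum.inr (Sum.inr x), Sum.inr (Sum.inr y) => ANDrel (n + 2) x y
      | Sum.inl x, Sum.inr (Sum.inl y) =>
          (x = 2 ∧ y = ANDa0 (n + 2)) ∨ (x = 3 ∧ y = ANDa1 (n + 2))
      | Sum.inl x, Sum.inr (Sum.inr y) =>
          (x = 4 ∧ y = ANDa0 (n + 2)) ∨ (x = 5 ∧ y = ANDa1 (n + 2))
      | _, _ => False

/-- The gadget `AND_ℓ` as a simple graph. -/
def ANDgraph (ℓ : ℕ) : SimpleGraph (ANDVert ℓ) := SimpleGraph.fromRel (ANDrel ℓ)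

/-- The set of in-terminals of `AND_ℓ`. -/
def ANDins (ℓ : ℕ) : Set (ANDVert ℓ) := ANDb ℓ '' Set.Iio (2 ^ ℓ)

/-- The binary block of in-terminals `{b_i : q·2^(ℓ-j) ≤ i < (q+1)·2^(ℓ-j)}`. -/
def binBlock (ℓ j q : ℕ) : Set (ANDVert ℓ) :=
  ANDb ℓ '' Set.Ico (q * 2 ^ (ℓ - j)) ((q + 1) * 2 ^ (ℓ - j))

/-- `ψ` is a partition of the set of in-terminals of `AND_ℓ` into binary blocks. -/
def IsBinBlockPartition (ℓ : ℕ) (ψ : Set (Set (ANDVert ℓ))) : Prop :=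
  (∀ C ∈ ψ, ∃ j ≤ ℓ, ∃ q < 2 ^ j, C = binBlock ℓ j q) ∧
  ⋃₀ ψ = ANDins ℓ ∧ ψ.PairwiseDisjoint id

/-- The partition `ρ` of `V` refines the partition `ψ` of a subset of `V`
(that is, it refines `ψ ∪ {V ∖ ⋃₀ ψ}`). -/
def RefinesCells {V : Type*} (ρ : Setoid V) (ψ : Set (Set V)) : Prop :=
  ∀ u v, ρ.r u v → (∃ C ∈ ψ, u ∈ C ∧ v ∈ C) ∨ (u ∉ ⋃₀ ψ ∧ v ∉ ⋃₀ ψ)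

/-- The partition induced by `ρ` on `⋃₀ ψ` equals `ψ`. -/
def AgreesWith {V : Type*} (ρ : Setoid V) (ψ : Set (Set V)) : Prop :=
  ∀ u ∈ ⋃₀ ψ, ∀ v ∈ ⋃₀ ψ, (ρ.r u v ↔ ∃ C ∈ ψ, u ∈ C ∧ v ∈ C)

/-- `ρ` is the coarsest stable partition (for `G`) refining the partition `ψ`
of a subset of the vertex set. -/
def IsCoarsestStableRefining {V : Type*} (G : SimpleGraph V) (ψ : Set (Set V))
    (ρ : Setoid V) : Prop :=
  IsStable G ρ ∧ RefinesCells ρ ψ ∧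
    ∀ σ : Setoid V, IsStable G σ → RefinesCells σ ψ → Finer σ ρ

/-!
Suppose no in-terminal pair is identified by `π`. A binary block with more than one element
contains such a pair, so `π` is discrete on the in-terminals. Grade the gadget by the distance
to the in-terminals: edges join consecutive levels, and each vertex above level `0` is
determined by its neighbours one level down. Stability then forces `π` to be discrete level by
level, contradicting `a₀ ≈_π a₁`.
-/
section RigidGrading

variable {V : Type*} (G : SimpleGraph V)

structure IsRigidGrading (level : V → ℕ) : Prop where
  adj_level : ∀ u v, G.Adj u v → level u = level v + 1 ∨ level v = level u + 1
  exists_adj_lower : ∀ u, 0 < level u → ∃ w, G.Adj u w ∧ level w + 1 = level u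
  eq_of_lower_subset : ∀ u v, level u = level v → 0 < level u →
    (∀ w, level w + 1 = level u → G.Adj u w → G.Adj v w) → u = v

variable {G} {π : Setoid V}

theorem cellDeg_pos_iff_of_singleton {w : V} (hw : ∀ x, π.r x w → x = w) (u : V) :
    0 < cellDeg G π u w ↔ G.Adj u w := by
  have hcell : {x | π.r x w} = {w} :=
    Set.ext fun x => ⟨hw x, fun hx => hx ▸ π.iseqv.refl x⟩
  rw [cellDeg, hcell, Set.ncard_pos ((Set.finite_singleton w).subset Set.inter_subset_right),
    Set.inter_singleton_nonempty, SimpleGraph.mem_neighborSet]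

theorem IsStable.adj_iff_of_singleton (hst : IsStable G π) {u v w : V} (huv : π.r u v)
    (hw : ∀ x, π.r x w → x = w) : G.Adj u w ↔ G.Adj v w := by
  rw [← cellDeg_pos_iff_of_singleton hw, ← cellDeg_pos_iff_of_singleton hw, hst u v huv w]

/-- Once all cells below level `k + 1` are singletons, stability makes `π`-equivalent vertices
at level `k + 1` have the same lower neighbours, so they coincide. -/
theorem IsRigidGrading.eq_of_rel {level : V → ℕ} (hG : IsRigidGrading G level)
    (hst : IsStable G π) (h0 : ∀ u v, level u = 0 → π.r u v → u = v) {u v : V}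
    (huv : π.r u v) : u = v := by
  suffices h : ∀ k u v, level u ≤ k → π.r u v → u = v from h _ u v le_rfl huv
  intro k
  induction k with
  | zero => exact fun u v hu => h0 u v (Nat.le_zero.mp hu)
  | succ k ih =>
    intro u v hu huv
    have hsingle : ∀ w, level w ≤ k → ∀ x, π.r x w → x = w :=
      fun w hw x hxw => (ih w x hw (π.symm' hxw)).symm
    rcases le_or_gt (level u) k with hu' | hu'
    · exact ih u v hu' huv
    rcases le_or_gt (level v) k with hv | hv
    · exact (ih v u hv (π.symm' huv)).symm
    obtain ⟨w, huw, hwu⟩ := hG.exists_adj_lower u (by omega)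
    have hvw := (hst.adj_iff_of_singleton huv (hsingle w (by omega))).mp huw
    have hlevel : level u = level v := by rcases hG.adj_level v w hvw with h | h <;> omega
    exact hG.eq_of_lower_subset u v hlevel (by omega) fun w' hw' huw' =>
      (hst.adj_iff_of_singleton huv (hsingle w' (by omega))).mp huw'

end RigidGrading

def AND1level (x : Fin 4) : ℕ := if x.val < 2 then 1 else 0

def AND2level (x : Fin 10) : ℕ := if x.val < 2 then 2 else if x.val < 6 then 0 else 1

def ANDheight : ℕ → ℕ
  | 0 | 1 => 1
  | 2 => 2
  | n + 3 => ANDheight (n + 2) + 3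

/-- The distance to the in-terminals; `ANDheight ℓ` is that of the out-terminals. -/
def ANDlevel : (ℓ : ℕ) → ANDVert ℓ → ℕ
  | 0, x | 1, x => AND1level x
  | 2, x => AND2level x
  | n + 3, .inl x => ANDheight (n + 2) + 1 + AND2level x
  | n + 3, .inr (.inl x) => ANDlevel (n + 2) x
  | n + 3, .inr (.inr x) => ANDlevel (n + 2) x

def ANDadj (ℓ : ℕ) (u v : ANDVert ℓ) : Prop := ANDrel ℓ u v ∨ ANDrel ℓ v u

instance : Fintype (ANDVert 1) := inferInstanceAs (Fintype (Fin 4))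
instance : Fintype (ANDVert 2) := inferInstanceAs (Fintype (Fin 10))
instance : DecidableEq (ANDVert 1) := inferInstanceAs (DecidableEq (Fin 4))
instance : DecidableEq (ANDVert 2) := inferInstanceAs (DecidableEq (Fin 10))

instance : DecidableRel (ANDrel 1) := fun (u v : Fin 4) =>
  inferInstanceAs (Decidable ((u = 0 ∧ v = 2) ∨ (u = 1 ∧ v = 3)))

instance : DecidableRel (ANDrel 2) := fun u v => by unfold ANDrel AND2rel; infer_instance

instance {ℓ : ℕ} [DecidableRel (ANDrel ℓ)] : DecidableRel (ANDadj ℓ) := fun u v =>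
  inferInstanceAs (Decidable (ANDrel ℓ u v ∨ ANDrel ℓ v u))

theorem ANDadj_comm {ℓ : ℕ} {u v : ANDVert ℓ} : ANDadj ℓ u v ↔ ANDadj ℓ v u := or_comm

theorem ANDlevel_ANDa0 : ∀ ℓ, ANDlevel ℓ (ANDa0 ℓ) = ANDheight ℓ
  | 0 | 1 | 2 | _ + 3 => rfl

theorem ANDlevel_ANDa1 : ∀ ℓ, ANDlevel ℓ (ANDa1 ℓ) = ANDheight ℓ
  | 0 | 1 | 2 | _ + 3 => rfl

theorem ANDlevel_le_ANDheight : ∀ ℓ (v : ANDVert ℓ), ANDlevel ℓ v ≤ ANDheight ℓ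
  | 0, v | 1, v => by simp only [ANDlevel, AND1level, ANDheight]; split <;> omega
  | 2, v => by revert v; decide
  | n + 3, .inl x => by simp only [ANDlevel, AND2level, ANDheight]; split_ifs <;> omega
  | n + 3, .inr (.inl x) | n + 3, .inr (.inr x) => by
    have := ANDlevel_le_ANDheight (n + 2) x
    simp only [ANDlevel, ANDheight]; omega

theorem ANDa0_ne_ANDa1 : ∀ ℓ, ANDa0 ℓ ≠ ANDa1 ℓ
  | 0 | 1 => show (0 : Fin 4) ≠ 1 by decide
  | 2 => show (0 : Fin 10) ≠ 1 by decide
  | _ + 3 => fun h => absurd (Sum.inl.inj h) (by decide)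

section TopToSub

variable {n : ℕ} {x y : Fin 10} {s : ANDVert (n + 2) ⊕ ANDVert (n + 2)}

theorem ANDadj_inl_inr (h : ANDadj (n + 3) (.inl x) (.inr s)) :
    x = 2 ∧ s = .inl (ANDa0 (n + 2)) ∨ x = 3 ∧ s = .inl (ANDa1 (n + 2)) ∨
      x = 4 ∧ s = .inr (ANDa0 (n + 2)) ∨ x = 5 ∧ s = .inr (ANDa1 (n + 2)) := by
  rcases h with h | h
  · rcases s with y | y <;> rcases h with ⟨rfl, rfl⟩ | ⟨rfl, rfl⟩ <;> simp
  · rcases s with _ | _ <;> exact h.elim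

theorem ANDlevel_inl_eq_inr_add_one (h : ANDadj (n + 3) (.inl x) (.inr s)) :
    ANDlevel (n + 3) (.inl x) = ANDlevel (n + 3) (.inr s) + 1 := by
  rcases ANDadj_inl_inr h with ⟨rfl, rfl⟩ | ⟨rfl, rfl⟩ | ⟨rfl, rfl⟩ | ⟨rfl, rfl⟩ <;>
    simp only [ANDlevel, ANDlevel_ANDa0, ANDlevel_ANDa1] <;> rfl

theorem eq_of_ANDadj_inl_inr (hx : ANDadj (n + 3) (.inl x) (.inr s))
    (hy : ANDadj (n + 3) (.inl y) (.inr s)) : x = y := by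
  have := ANDa0_ne_ANDa1 (n + 2)
  rcases ANDadj_inl_inr hx with ⟨rfl, rfl⟩ | ⟨rfl, rfl⟩ | ⟨rfl, rfl⟩ | ⟨rfl, rfl⟩ <;>
    rcases ANDadj_inl_inr hy with ⟨rfl, h⟩ | ⟨rfl, h⟩ | ⟨rfl, h⟩ | ⟨rfl, h⟩ <;> simp_all [eq_comm]

theorem exists_ANDadj_inl_inr (hx : ANDlevel 2 x = 0) : ∃ s, ANDadj (n + 3) (.inl x) (.inr s) := by
  have hbottom : ∀ x : Fin 10, AND2level x = 0 → x = 2 ∨ x = 3 ∨ x = 4 ∨ x = 5 := by decide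
  rcases hbottom x hx with rfl | rfl | rfl | rfl
  exacts [⟨.inl (ANDa0 _), .inl (.inl ⟨rfl, rfl⟩)⟩, ⟨.inl (ANDa1 _), .inl (.inr ⟨rfl, rfl⟩)⟩,
    ⟨.inr (ANDa0 _), .inl (.inl ⟨rfl, rfl⟩)⟩, ⟨.inr (ANDa1 _), .inl (.inr ⟨rfl, rfl⟩)⟩]

end TopToSub

theorem ANDadj_level : ∀ ℓ (u v : ANDVert ℓ), ANDadj ℓ u v →
    ANDlevel ℓ u = ANDlevel ℓ v + 1 ∨ ANDlevel ℓ v = ANDlevel ℓ u + 1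
  | 0 => fun _ _ h => h.elim False.elim False.elim
  | 1 => by decide
  | 2 => by decide
  | n + 3 => by
    rintro (x | s) (y | t) h
    · have := ANDadj_level 2 x y h
      simp only [ANDlevel] at this ⊢; omega
    · exact .inl (ANDlevel_inl_eq_inr_add_one h)
    · exact .inr (ANDlevel_inl_eq_inr_add_one (ANDadj_comm.mp h))
    · rcases s with x | x <;> rcases t with y | y
      · exact ANDadj_level (n + 2) x y h
      · exact h.elim False.elim False.elim
      · exact h.elim False.elim False.elim
      · exact ANDadj_level (n + 2) x y h

theorem exists_ANDadj_lower : ∀ ℓ, 1 ≤ ℓ → ∀ u : ANDVert ℓ, 0 < ANDlevel ℓ u →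
    ∃ w, ANDadj ℓ u w ∧ ANDlevel ℓ w + 1 = ANDlevel ℓ u
  | 1, _ => by decide
  | 2, _ => by decide
  | n + 3, _ => by
    rintro (x | x | x) hx
    · by_cases h0 : ANDlevel 2 x = 0
      · obtain ⟨s, hs⟩ := exists_ANDadj_inl_inr (n := n) h0
        exact ⟨.inr s, hs, (ANDlevel_inl_eq_inr_add_one hs).symm⟩
      · obtain ⟨z, hz, hzx⟩ := exists_ANDadj_lower 2 (by norm_num) x (Nat.pos_of_ne_zero h0)
        refine ⟨.inl z, hz, ?_⟩
        simp only [ANDlevel] at hzx ⊢; omega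
    · obtain ⟨w, hw, hwx⟩ := exists_ANDadj_lower (n + 2) (by omega) x hx
      exact ⟨.inr (.inl w), hw, hwx⟩
    · obtain ⟨w, hw, hwx⟩ := exists_ANDadj_lower (n + 2) (by omega) x hx
      exact ⟨.inr (.inr w), hw, hwx⟩

theorem eq_of_ANDadj_lower_subset : ∀ ℓ, 1 ≤ ℓ → ∀ u v : ANDVert ℓ,
    ANDlevel ℓ u = ANDlevel ℓ v → 0 < ANDlevel ℓ u →
    (∀ w, ANDlevel ℓ w + 1 = ANDlevel ℓ u → ANDadj ℓ u w → ANDadj ℓ v w) → u = v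
  | 1, _ => by decide
  | 2, _ => by decide
  | n + 3, _ => by
    have sub_lt_top : ∀ x s, ANDlevel (n + 3) (.inr s) < ANDlevel (n + 3) (.inl x) := by
      rintro x (y | y) <;> have := ANDlevel_le_ANDheight (n + 2) y <;>
        simp only [ANDlevel] <;> omega
    rintro (x | s) (y | t) hxy hpos hsub
    · by_cases h0 : ANDlevel 2 x = 0
      · obtain ⟨s, hs⟩ := exists_ANDadj_inl_inr (n := n) h0
        rw [eq_of_ANDadj_inl_inr hs (hsub (.inr s) (ANDlevel_inl_eq_inr_add_one hs).symm hs)]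
      · refine congrArg Sum.inl (eq_of_ANDadj_lower_subset 2 (by norm_num) x y
          (by simpa only [ANDlevel, Nat.add_left_cancel_iff] using hxy) (Nat.pos_of_ne_zero h0)
          fun z hz hxz => hsub (.inl z) ?_ hxz)
        simp only [ANDlevel] at hz ⊢; omega
    · exact absurd hxy (sub_lt_top x t).ne'
    · exact absurd hxy (sub_lt_top y s).ne
    · rcases s with x | x <;> rcases t with y | y
      · exact congrArg (Sum.inr ∘ Sum.inl) (eq_of_ANDadj_lower_subset (n + 2) (by omega) x y hxy
          hpos fun w hw hxw => hsub (.inr (.inl w)) hw hxw)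
      · obtain ⟨w, hxw, hw⟩ := exists_ANDadj_lower (n + 2) (by omega) x hpos
        exact (hsub (.inr (.inl w)) hw hxw).elim False.elim False.elim
      · obtain ⟨w, hxw, hw⟩ := exists_ANDadj_lower (n + 2) (by omega) x hpos
        exact (hsub (.inr (.inr w)) hw hxw).elim False.elim False.elim
      · exact congrArg (Sum.inr ∘ Sum.inr) (eq_of_ANDadj_lower_subset (n + 2) (by omega) x y hxy
          hpos fun w hw hxw => hsub (.inr (.inr w)) hw hxw)

theorem ANDb_add_three_of_lt {n i : ℕ} (hi : i < 2 ^ (n + 2)) :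
    ANDb (n + 3) i = (.inr (.inl (ANDb (n + 2) i)) : ANDVert (n + 3)) := by
  rw [ANDb.eq_7]; exact if_pos hi

theorem ANDb_add_three_two_pow_add (n i : ℕ) :
    ANDb (n + 3) (2 ^ (n + 2) + i) = (.inr (.inr (ANDb (n + 2) i)) : ANDVert (n + 3)) := by
  rw [ANDb.eq_7]; exact (if_neg (by omega)).trans (by rw [Nat.add_sub_cancel_left])

theorem exists_ANDb_of_ANDlevel_eq_zero : ∀ ℓ, 1 ≤ ℓ → ∀ u : ANDVert ℓ, ANDlevel ℓ u = 0 →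
    ∃ i < 2 ^ ℓ, ANDb ℓ i = u
  | 1, _ => by decide
  | 2, _ => by decide
  | n + 3, _ => by
    have hpow : 2 ^ (n + 3) = 2 ^ (n + 2) * 2 := pow_succ 2 (n + 2)
    rintro (x | x | x) hx
    · simp only [ANDlevel] at hx; omega
    · obtain ⟨i, hi, rfl⟩ := exists_ANDb_of_ANDlevel_eq_zero (n + 2) (by omega) x hx
      exact ⟨i, by omega, ANDb_add_three_of_lt hi⟩
    · obtain ⟨i, hi, rfl⟩ := exists_ANDb_of_ANDlevel_eq_zero (n + 2) (by omega) x hx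
      exact ⟨2 ^ (n + 2) + i, by omega, ANDb_add_three_two_pow_add n i⟩

theorem ANDgraph_adj_iff {ℓ : ℕ} {u v : ANDVert ℓ} : (ANDgraph ℓ).Adj u v ↔ ANDadj ℓ u v := by
  rw [ANDgraph, SimpleGraph.fromRel_adj]
  refine ⟨And.right, fun h => ⟨?_, h⟩⟩
  rintro rfl
  rcases ANDadj_level ℓ u u h with h' | h' <;> omega

theorem isRigidGrading_ANDgraph {ℓ : ℕ} (hℓ : 1 ≤ ℓ) :
    IsRigidGrading (ANDgraph ℓ) (ANDlevel ℓ) where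
  adj_level u v h := ANDadj_level ℓ u v (ANDgraph_adj_iff.mp h)
  exists_adj_lower u hu := by
    simpa only [ANDgraph_adj_iff] using exists_ANDadj_lower ℓ hℓ u hu
  eq_of_lower_subset u v huv hu h := eq_of_ANDadj_lower_subset ℓ hℓ u v huv hu fun w hw huw =>
    ANDgraph_adj_iff.mp (h w hw (ANDgraph_adj_iff.mpr huw))

theorem binBlock_self_subsingleton (ℓ q : ℕ) : (binBlock ℓ ℓ q).Subsingleton := by
  rintro _ ⟨i, hi, rfl⟩ _ ⟨j, hj, rfl⟩
  simp only [Nat.sub_self, pow_zero, mul_one, Set.mem_Ico] at hi hj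
  rw [show i = j by omega]

theorem exists_pair_mem_binBlock {ℓ j q : ℕ} (hj : j < ℓ) (hq : q < 2 ^ j) :
    ∃ p < 2 ^ (ℓ - 1), ANDb ℓ (2 * p) ∈ binBlock ℓ j q ∧ ANDb ℓ (2 * p + 1) ∈ binBlock ℓ j q := by
  obtain ⟨k, rfl⟩ : ∃ k, ℓ = j + k + 1 := ⟨ℓ - j - 1, by omega⟩
  have hm : 0 < 2 ^ k := Nat.two_pow_pos k
  rw [show j + k + 1 - 1 = j + k by omega, pow_add]
  refine ⟨q * 2 ^ k, Nat.mul_lt_mul_of_pos_right hq hm, ⟨_, ?_, rfl⟩, ⟨_, ?_, rfl⟩⟩ <;>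
    rw [show j + k + 1 - j = k + 1 by omega, pow_succ, Set.mem_Ico] <;> constructor <;> nlinarith

theorem eq_of_rel_of_mem_ANDins {ℓ : ℕ} {π : Setoid (ANDVert ℓ)} {ψ : Set (Set (ANDVert ℓ))}
    (hψ : IsBinBlockPartition ℓ ψ) (hag : AgreesWith π ψ)
    (hpairs : ∀ p < 2 ^ (ℓ - 1), ¬π.r (ANDb ℓ (2 * p)) (ANDb ℓ (2 * p + 1)))
    {u v : ANDVert ℓ} (hu : u ∈ ANDins ℓ) (hv : v ∈ ANDins ℓ) (huv : π.r u v) : u = v := by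
  obtain ⟨hblocks, hunion, -⟩ := hψ
  rw [← hunion] at hu hv
  obtain ⟨C, hC, huC, hvC⟩ := (hag u hu v hv).mp huv
  obtain ⟨j, hj, q, hq, rfl⟩ := hblocks C hC
  rcases hj.lt_or_eq with hj | rfl
  · obtain ⟨p, hp, h0, h1⟩ := exists_pair_mem_binBlock hj hq
    exact absurd ((hag _ ⟨_, hC, h0⟩ _ ⟨_, hC, h1⟩).mpr ⟨_, hC, h0, h1⟩) (hpairs p hp)
  · exact binBlock_self_subsingleton _ q huC hvC

/-- Let `ℓ ≥ 1` and let `π` be a stable partition of `AND_ℓ` such that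
the set `B` of in-terminals is `π`-closed and `π` induces on `B` a partition into binary
blocks.  If `π` does not distinguish the out-terminals `a₀, a₁`, then some in-terminal
pair `(b_{2p}, b_{2p+1})` is not distinguished by `π`. -/
theorem AND_gadget_out_in (ℓ : ℕ) (hℓ : 1 ≤ ℓ) (π : Setoid (ANDVert ℓ))
    (hst : IsStable (ANDgraph ℓ) π) (hcl : Closed π (ANDins ℓ))
    (hbb : ∃ ψ : Set (Set (ANDVert ℓ)), IsBinBlockPartition ℓ ψ ∧ AgreesWith π ψ)
    (ha : π.r (ANDa0 ℓ) (ANDa1 ℓ)) :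
    ∃ p < 2 ^ (ℓ - 1), π.r (ANDb ℓ (2 * p)) (ANDb ℓ (2 * p + 1)) := by
  by_contra! hpairs
  obtain ⟨ψ, hψ, hag⟩ := hbb
  have h0 : ∀ u v, ANDlevel ℓ u = 0 → π.r u v → u = v := fun u v hu huv => by
    have hu' : u ∈ ANDins ℓ := exists_ANDb_of_ANDlevel_eq_zero ℓ hℓ u hu
    exact eq_of_rel_of_mem_ANDins hψ hag hpairs hu' ((hcl u v huv).mp hu') huv
  exact ANDa0_ne_ANDa1 ℓ ((isRigidGrading_ANDgraph hℓ).eq_of_rel hst h0 ha)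
end
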